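/- There exists a real number s with 1 < s < 1.01 satisfying the Efimov equation s = (8/√3) · sinh(π·s/6) / cosh(π·s/2). -/

import Mathlib

open Real Set

/-! Write `x = exp (π s / 6)`, so that `sinh (π s / 6) = (x - x⁻¹) / 2` and
`cosh (π s / 2) = (x³ + x⁻³) / 2`. Clearing the positive denominators, the Efimov equation says
that `8 sinh (π s / 6) - √3 s cosh (π s / 2)` vanishes. Taylor bounds for `exp` together with
`3.141592 < π < 3.141593` pin `x` down to within `2 · 10⁻⁴` at `s = 1` and at `s = 1.01`, which is
enough to see that this continuous function is positive at `1` and negative at `1.01`; the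
intermediate value theorem then gives the root. -/

noncomputable def efimovGap (s : ℝ) : ℝ :=
  8 * sinh (π * s / 6) - √3 * s * cosh (π * s / 2)

theorem continuous_efimovGap : Continuous efimovGap := by
  unfold efimovGap
  fun_prop

theorem eq_efimov_iff_efimovGap_eq_zero (s : ℝ) :
    s = 8 / √3 * sinh (π * s / 6) / cosh (π * s / 2) ↔ efimovGap s = 0 := by
  have hsqrt : (0 : ℝ) < √3 := by positivity
  rw [efimovGap, eq_div_iff (cosh_pos _).ne', sub_eq_zero, div_mul_eq_mul_div,
    eq_div_iff hsqrt.ne']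
  constructor <;> intro h <;> linarith

noncomputable def efimovRational (c x : ℝ) : ℝ :=
  4 * (x - x⁻¹) - c * (x ^ 3 + x⁻¹ ^ 3)

theorem efimovGap_eq_efimovRational (s : ℝ) :
    efimovGap s = efimovRational (√3 * s / 2) (exp (π * s / 6)) := by
  have hsinh : sinh (π * s / 6) = (exp (π * s / 6) - (exp (π * s / 6))⁻¹) / 2 := by
    rw [sinh_eq, exp_neg]
  have hcosh : cosh (π * s / 2) = (exp (π * s / 6) ^ 3 + (exp (π * s / 6))⁻¹ ^ 3) / 2 := by
    rw [cosh_eq, ← exp_neg, ← exp_nat_mul, ← exp_nat_mul]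
    push_cast
    ring_nf
  rw [efimovGap, efimovRational, hsinh, hcosh]
  ring

section Bounds

variable {a b c c' x : ℝ}

theorem le_efimovRational (ha : 0 < a) (hx : x ∈ Icc a b) (hc : c ≤ c') (hc' : 0 ≤ c') :
    4 * (a - a⁻¹) - c' * (b ^ 3 + a⁻¹ ^ 3) ≤ efimovRational c x := by
  have hx0 : 0 < x := ha.trans_le hx.1
  have hinv : x⁻¹ ≤ a⁻¹ := inv_anti₀ ha hx.1
  have hcube : x ^ 3 + x⁻¹ ^ 3 ≤ b ^ 3 + a⁻¹ ^ 3 := by gcongr; exact hx.2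
  have hcube0 : 0 ≤ x ^ 3 + x⁻¹ ^ 3 := by positivity
  unfold efimovRational
  linarith [hx.1, mul_le_mul_of_nonneg_left hcube hc', mul_le_mul_of_nonneg_right hc hcube0]

theorem efimovRational_le (ha : 0 < a) (hx : x ∈ Icc a b) (hc : c' ≤ c) (hc' : 0 ≤ c') :
    efimovRational c x ≤ 4 * (b - b⁻¹) - c' * (a ^ 3 + b⁻¹ ^ 3) := by
  have hx0 : 0 < x := ha.trans_le hx.1
  have hinv : b⁻¹ ≤ x⁻¹ := inv_anti₀ hx0 hx.2
  have hb : 0 ≤ b⁻¹ := inv_nonneg.2 (hx0.le.trans hx.2)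
  have hcube : a ^ 3 + b⁻¹ ^ 3 ≤ x ^ 3 + x⁻¹ ^ 3 := by gcongr; exact hx.1
  have hcube0 : 0 ≤ x ^ 3 + x⁻¹ ^ 3 := by positivity
  unfold efimovRational
  linarith [hx.2, mul_le_mul_of_nonneg_left hcube hc', mul_le_mul_of_nonneg_right hc hcube0]

end Bounds

theorem exp_mem_Icc_taylor {l u y : ℝ} (hl : 0 ≤ l) (hy : y ∈ Icc l u) (hu : u ≤ 1) {n : ℕ}
    (hn : 0 < n) :
    exp y ∈ Icc (∑ i ∈ Finset.range n, l ^ i / i.factorial)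
      (∑ i ∈ Finset.range n, u ^ i / i.factorial + u ^ n * (n + 1) / (n.factorial * n)) :=
  ⟨(sum_le_exp_of_nonneg hl n).trans (exp_le_exp.2 hy.1),
    (exp_le_exp.2 hy.2).trans (exp_bound' (hl.trans (hy.1.trans hy.2)) hu hn)⟩

theorem exp_pi_mul_div_six_mem_Icc {s : ℝ} (hs : 0 ≤ s) (hs' : s ≤ 1.9) :
    exp (π * s / 6) ∈ Icc (∑ i ∈ Finset.range 7, (3.141592 * s / 6) ^ i / i.factorial)
      (∑ i ∈ Finset.range 7, (3.141593 * s / 6) ^ i / i.factorial +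
        (3.141593 * s / 6) ^ 7 * (7 + 1) / ((7).factorial * 7)) := by
  refine exp_mem_Icc_taylor (by positivity) ⟨?_, ?_⟩ (by linarith) (by norm_num)
  · have := mul_le_mul_of_nonneg_right pi_gt_d6.le hs
    linarith
  · have := mul_le_mul_of_nonneg_right pi_lt_d6.le hs
    linarith

theorem efimovGap_one_pos : 0 < efimovGap 1 := by
  have hx : exp (π * 1 / 6) ∈ Icc 1.688 1.6882 := by
    have h := exp_pi_mul_div_six_mem_Icc (s := 1) (by norm_num) (by norm_num)
    norm_num [Finset.sum_range_succ, Nat.factorial] at h ⊢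
    exact ⟨by linarith [h.1], by linarith [h.2]⟩
  have hsqrt : √3 < 1.7321 := (sqrt_lt' (by norm_num)).2 (by norm_num)
  calc (0 : ℝ) < 4 * (1.688 - 1.688⁻¹) - 1.7321 / 2 * (1.6882 ^ 3 + 1.688⁻¹ ^ 3) := by norm_num
    _ ≤ efimovGap 1 := by
      rw [efimovGap_eq_efimovRational]
      exact le_efimovRational (by norm_num) hx (by linarith) (by norm_num)

theorem efimovGap_one_point_zero_one_neg : efimovGap 1.01 < 0 := by
  have hx : exp (π * 1.01 / 6) ∈ Icc 1.6969 1.6971 := by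
    have h := exp_pi_mul_div_six_mem_Icc (s := 1.01) (by norm_num) (by norm_num)
    norm_num [Finset.sum_range_succ, Nat.factorial] at h ⊢
    exact ⟨by linarith [h.1], by linarith [h.2]⟩
  have hsqrt : 1.732 < √3 := (lt_sqrt (by norm_num)).2 (by norm_num)
  calc efimovGap 1.01
      ≤ 4 * (1.6971 - 1.6971⁻¹) - 1.732 * 1.01 / 2 * (1.6969 ^ 3 + 1.6971⁻¹ ^ 3) := by
        rw [efimovGap_eq_efimovRational]
        exact efimovRational_le (by norm_num) hx (by linarith) (by norm_num)
    _ < 0 := by norm_num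

/-- There is a root `s₀` of the Efimov transcendental equation
`s = (8/√3) sinh(πs/6)/cosh(πs/2)` in the interval `(1, 1.01)`. -/
theorem efimov_constant_exists :
    ∃ s : ℝ, 1 < s ∧ s < 1.01 ∧
      s = (8 / Real.sqrt 3) * Real.sinh (π * s / 6) / Real.cosh (π * s / 2) := by
  obtain ⟨s, ⟨hs₁, hs₂⟩, hs⟩ :=
    intermediate_value_Ioo' (by norm_num : (1 : ℝ) ≤ 1.01) continuous_efimovGap.continuousOn
      ⟨efimovGap_one_point_zero_one_neg, efimovGap_one_pos⟩
  exact ⟨s, hs₁, hs₂, (eq_efimov_iff_efimovGap_eq_zero s).2 hs⟩
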